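/- In the two-player interconnected contest with Tullock contest success function with parameter γ ∈ (0,1], in every Nash equilibrium (e_1, e_2), and for any pair of spillover matrices, the total effort of each player i ∈ {1,2} obeys the upper bound Σ_{k∈B} e_i^k ≤ (γ/(4 c_i)) Σ_{k∈B} v^k. -/

import Mathlib

open Finset Matrix

/-- Effective effort of a player with spillover matrix `ρ` and effort vector `e`
at battlefield `k`: `y^k = e^k + ∑_{l ≠ k} ρ^{l,k} e^l`. -/
noncomputable def effY {m : ℕ} (ρ : Matrix (Fin m) (Fin m) ℝ) (e : Fin m → ℝ)
    (k : Fin m) : ℝ :=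
  e k + ∑ l ∈ Finset.univ.erase k, ρ l k * e l

/-- Tullock contest success function with parameter `γ`.  When both effective
efforts are `0` this gives `0/0 = 0`, matching the convention. -/
noncomputable def tullock (γ y₁ y₂ : ℝ) : ℝ :=
  y₁ ^ γ / (y₁ ^ γ + y₂ ^ γ)

/-- Payoff of player `i` in the interconnected contest. -/
noncomputable def payoff {m : ℕ} (γ : ℝ) (v : Fin m → ℝ) (c : Fin 2 → ℝ)
    (ρ : Fin 2 → Matrix (Fin m) (Fin m) ℝ) (e : Fin 2 → Fin m → ℝ) (i : Fin 2) : ℝ :=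
  (∑ k, v k * tullock γ (effY (ρ i) (e i) k) (effY (ρ (1 - i)) (e (1 - i)) k))
    - c i * ∑ k, e i k

/-- Pure strategy Nash equilibrium of the interconnected contest:
nonnegative efforts, and no profitable deviation to any nonnegative effort vector. -/
def IsNashEq {m : ℕ} (γ : ℝ) (v : Fin m → ℝ) (c : Fin 2 → ℝ)
    (ρ : Fin 2 → Matrix (Fin m) (Fin m) ℝ) (e : Fin 2 → Fin m → ℝ) : Prop :=
  (∀ i k, 0 ≤ e i k) ∧
  ∀ (i : Fin 2) (e' : Fin m → ℝ), (∀ k, 0 ≤ e' k) →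
    payoff γ v c ρ (Function.update e i e') i ≤ payoff γ v c ρ e i

/-- Winning probability of player `i` at battlefield `k` under profile `e`. -/
noncomputable def eqProb {m : ℕ} (γ : ℝ) (ρ : Fin 2 → Matrix (Fin m) (Fin m) ℝ)
    (e : Fin 2 → Fin m → ℝ) (i : Fin 2) (k : Fin m) : ℝ :=
  tullock γ (effY (ρ i) (e i) k) (effY (ρ (1 - i)) (e (1 - i)) k)

open Filter Topology

/-! Scaling one's own effort vector down by `t < 1` saves `c_i (1 - t) ∑ e_i` in costs, while it
lowers each winning probability by at most `(1 - t^γ) / (4 t^γ)`. At equilibrium this deviation is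
unprofitable; dividing by `1 - t` and letting `t → 1⁻`, the quotient `(1 - t^γ) / (1 - t)` tends to
the derivative `γ` of `t ↦ t^γ` at `1`. -/

theorem div_add_sub_mul_div_mul_add_le {a b s : ℝ} (ha : 0 ≤ a) (hb : 0 ≤ b) (hs0 : 0 < s)
    (hs1 : s ≤ 1) : a / (a + b) - a * s / (a * s + b) ≤ (1 - s) / (4 * s) := by
  have hrhs : 0 ≤ (1 - s) / (4 * s) := div_nonneg (by linarith) (by positivity)
  rcases ha.eq_or_lt with rfl | ha
  · simpa using hrhs
  rcases hb.eq_or_lt with rfl | hb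
  · rwa [add_zero, add_zero, div_self ha.ne', div_self (by positivity), sub_self]
  rw [div_sub_div _ _ (by positivity) (by positivity), div_le_div_iff₀ (by positivity) (by positivity)]
  -- `(a + b) (a s + b) - 4 a b s = s (a - b)^2 + (1 - s) (a + b) b`
  nlinarith [mul_nonneg (mul_nonneg (sub_nonneg.2 hs1) hs0.le) (sq_nonneg (a - b)),
    mul_nonneg (mul_nonneg (sq_nonneg (1 - s)) (add_pos ha hb).le) hb.le]

theorem tullock_sub_tullock_mul_le {γ y₁ y₂ t : ℝ} (hγ : 0 ≤ γ) (hy₁ : 0 ≤ y₁) (hy₂ : 0 ≤ y₂)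
    (ht0 : 0 < t) (ht1 : t ≤ 1) :
    tullock γ y₁ y₂ - tullock γ (t * y₁) y₂ ≤ (1 - t ^ γ) / (4 * t ^ γ) := by
  rw [tullock, tullock, Real.mul_rpow ht0.le hy₁, mul_comm (t ^ γ)]
  exact div_add_sub_mul_div_mul_add_le (Real.rpow_nonneg hy₁ γ) (Real.rpow_nonneg hy₂ γ)
    (Real.rpow_pos_of_pos ht0 γ) (Real.rpow_le_one ht0.le ht1 hγ)

theorem tendsto_one_sub_rpow_div_one_sub (γ : ℝ) :
    Tendsto (fun t : ℝ => (1 - t ^ γ) / (1 - t)) (𝓝[<] 1) (𝓝 γ) := by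
  have hderiv : HasDerivAt (fun t : ℝ => t ^ γ) γ 1 := by
    simpa using Real.hasDerivAt_rpow_const (x := 1) (p := γ) (Or.inl one_ne_zero)
  refine ((hasDerivAt_iff_tendsto_slope.mp hderiv).mono_left
    (nhdsWithin_mono 1 fun t ht => ne_of_lt ht)).congr fun t => ?_
  rw [slope_def_field, Real.one_rpow, ← neg_div_neg_eq, neg_sub, neg_sub]

theorem le_of_forall_mul_one_sub_le {x V γ : ℝ}
    (h : ∀ t ∈ Set.Ioo (0 : ℝ) 1, x * (1 - t) ≤ (1 - t ^ γ) / (4 * t ^ γ) * V) :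
    x ≤ γ / 4 * V := by
  have hbound : ∀ t ∈ Set.Ioo (0 : ℝ) 1, x ≤ (1 - t ^ γ) / (1 - t) * (1 / (4 * t ^ γ)) * V := by
    intro t ht
    have hrearr : (1 - t ^ γ) / (1 - t) * (1 / (4 * t ^ γ)) * V
        = (1 - t ^ γ) / (4 * t ^ γ) * V / (1 - t) := by ring
    rw [hrearr, le_div_iff₀ (sub_pos.2 ht.2)]
    exact h t ht
  have hcont : ContinuousAt (fun t : ℝ => 1 / (4 * t ^ γ)) 1 :=
    continuousAt_const.div (continuousAt_const.mul
      (Real.continuousAt_rpow_const 1 γ (Or.inl one_ne_zero))) (by simp)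
  have hlim : Tendsto (fun t : ℝ => (1 - t ^ γ) / (1 - t) * (1 / (4 * t ^ γ)) * V)
      (𝓝[<] 1) (𝓝 (γ / 4 * V)) := by
    simpa [div_eq_mul_inv] using ((tendsto_one_sub_rpow_div_one_sub γ).mul
      (hcont.tendsto.mono_left nhdsWithin_le_nhds)).mul_const V
  exact ge_of_tendsto hlim <| by
    filter_upwards [Ioo_mem_nhdsLT_of_mem ⟨zero_lt_one, le_rfl⟩] with t ht using hbound t ht

theorem effY_nonneg {m : ℕ} {ρ : Matrix (Fin m) (Fin m) ℝ} {e : Fin m → ℝ}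
    (hρ : ∀ k l, 0 ≤ ρ k l) (he : ∀ k, 0 ≤ e k) (k : Fin m) : 0 ≤ effY ρ e k :=
  add_nonneg (he k) (sum_nonneg fun l _ => mul_nonneg (hρ l k) (he l))

theorem effY_smul {m : ℕ} (ρ : Matrix (Fin m) (Fin m) ℝ) (e : Fin m → ℝ) (t : ℝ) (k : Fin m) :
    effY ρ (t • e) k = t * effY ρ e k := by
  simp only [effY, Pi.smul_apply, smul_eq_mul, mul_add, mul_sum, mul_left_comm]

theorem IsNashEq.mul_sum_mul_one_sub_le {m : ℕ} {γ : ℝ} {v : Fin m → ℝ} {c : Fin 2 → ℝ}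
    {ρ : Fin 2 → Matrix (Fin m) (Fin m) ℝ} {e : Fin 2 → Fin m → ℝ} (he : IsNashEq γ v c ρ e)
    (hγ : 0 ≤ γ) (hv : ∀ k, 0 ≤ v k) (hρ : ∀ i k l, 0 ≤ ρ i k l) (i : Fin 2) {t : ℝ}
    (ht0 : 0 < t) (ht1 : t ≤ 1) :
    (c i * ∑ k, e i k) * (1 - t) ≤ (1 - t ^ γ) / (4 * t ^ γ) * ∑ k, v k := by
  have hdev := he.2 i (t • e i) fun k => mul_nonneg ht0.le (he.1 i k)
  simp only [payoff, Function.update_self,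
    Function.update_of_ne (show 1 - i ≠ i by fin_cases i <;> decide), effY_smul] at hdev
  have hloss : ∑ k, v k * tullock γ (effY (ρ i) (e i) k) (effY (ρ (1 - i)) (e (1 - i)) k)
      - ∑ k, v k * tullock γ (t * effY (ρ i) (e i) k) (effY (ρ (1 - i)) (e (1 - i)) k)
      ≤ (1 - t ^ γ) / (4 * t ^ γ) * ∑ k, v k := by
    rw [← sum_sub_distrib, mul_sum]
    refine sum_le_sum fun k _ => ?_
    rw [← mul_sub, mul_comm _ (v k)]
    exact mul_le_mul_of_nonneg_left (tullock_sub_tullock_mul_le hγ (effY_nonneg (hρ i) (he.1 i) k)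
      (effY_nonneg (hρ (1 - i)) (he.1 (1 - i)) k) ht0 ht1) (hv k)
  have hcost : ∑ k, (t • e i) k = t * ∑ k, e i k := by simp [mul_sum]
  rw [hcost] at hdev
  linarith

theorem equilibrium_total_effort_upper_bound_general (m : ℕ) (γ : ℝ) (hγ0 : 0 < γ)
    (v : Fin m → ℝ) (hv : ∀ k, 0 < v k)
    (c : Fin 2 → ℝ) (hc : ∀ i, 0 < c i)
    (ρ : Fin 2 → Matrix (Fin m) (Fin m) ℝ)
    (hρ : ∀ i k l, 0 ≤ ρ i k l)
    (e : Fin 2 → Fin m → ℝ) (he : IsNashEq γ v c ρ e) (i : Fin 2) :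
    ∑ k, e i k ≤ (γ / (4 * c i)) * ∑ k, v k := by
  have hci := hc i
  have hbound : c i * ∑ k, e i k ≤ γ / 4 * ∑ k, v k :=
    le_of_forall_mul_one_sub_le fun t ht =>
      he.mul_sum_mul_one_sub_le hγ0.le (fun k => (hv k).le) hρ i ht.1 ht.2.le
  rw [div_mul_eq_mul_div, le_div_iff₀ (by positivity)]
  linarith

/-- upper bound on equilibrium total effort. -/
theorem equilibrium_total_effort_upper_bound (m : ℕ) (γ : ℝ) (hγ0 : 0 < γ) (hγ1 : γ ≤ 1)
    (v : Fin m → ℝ) (hv : ∀ k, 0 < v k)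
    (c : Fin 2 → ℝ) (hc : ∀ i, 0 < c i)
    (ρ : Fin 2 → Matrix (Fin m) (Fin m) ℝ)
    (hρ : ∀ i k l, 0 ≤ ρ i k l) (hρd : ∀ i k, ρ i k k = 0)
    (e : Fin 2 → Fin m → ℝ) (he : IsNashEq γ v c ρ e) (i : Fin 2) :
    ∑ k, e i k ≤ (γ / (4 * c i)) * ∑ k, v k :=
  equilibrium_total_effort_upper_bound_general m γ hγ0 v hv c hc ρ hρ e he i
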